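/- (Combined pessimism) If both |R̂(s,a) − R(s,a)| ≤ u_R(s,a) for all (s,a) and ‖T(·|s,a) − T̂(·|s,a)‖₁ · R_max ≤ u_T(s,a) for all (s,a), then for every policy π, E_{τ ∼ d^π_{T̂}}[ R̂(τ) − u_T(τ) − u_R(τ) ] ≤ V^π_{T,R}. -/

import Mathlib

open Finset

variable {S A : Type*}

/-- Probability of a length-`H` trajectory (sequence of state-action pairs) under
policy `π`, transition kernel `T`, starting from initial state `s₀`. -/
noncomputable def trajProb [Fintype S] [Fintype A] [DecidableEq S]
    (H : ℕ) (hH : 0 < H) (s₀ : S) (T : S → A → S → ℝ) (π : S → A → ℝ)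
    (τ : Fin H → S × A) : ℝ :=
  (if (τ ⟨0, hH⟩).1 = s₀ then (1 : ℝ) else 0) *
    (∏ j, π (τ j).1 (τ j).2) *
    ∏ j : Fin (H - 1),
      T (τ (j.castLE (Nat.sub_le H 1))).1 (τ (j.castLE (Nat.sub_le H 1))).2
        (τ ⟨j.val + 1, by have := j.isLt; omega⟩).1

/-- Trajectory return: sum of per-step rewards. -/
def trajReward (H : ℕ) (R : S → A → ℝ) (τ : Fin H → S × A) : ℝ :=
  ∑ j, R (τ j).1 (τ j).2

/-- L1 (total-variation style) distance between two kernels at `(s, a)`. -/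
def tvDist [Fintype S] (T T' : S → A → S → ℝ) (s : S) (a : A) : ℝ :=
  ∑ s', |T s a s' - T' s a s'|

/-- Expected return of policy `π` under kernel `T` and reward `R`. -/
noncomputable def value [Fintype S] [Fintype A] [DecidableEq S] [DecidableEq A]
    (H : ℕ) (hH : 0 < H) (s₀ : S) (T : S → A → S → ℝ) (π : S → A → ℝ)
    (R : S → A → ℝ) : ℝ :=
  ∑ τ : Fin H → S × A, trajProb H hH s₀ T π τ * trajReward H R τ

/-!
Both sides are finite-horizon values computed by backward induction (the Bellman recursion
`horizonValue`). One step of that recursion compares the learned model on the pessimistic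
reward `Rhat - uT - uR` with the true model on `R`: the reward error is absorbed by `uR`,
and since the true value of the remaining steps lies in `[0, Rmax]`, replacing `That` by `T`
in its expectation costs at most `‖T - That‖₁ * Rmax ≤ uT`. Induction on the horizon gives the
claim.
-/

theorem Fin.sum_univ_fun_succ {α M : Type*} [Fintype α] [AddCommMonoid M] {n : ℕ}
    (f : (Fin (n + 1) → α) → M) :
    ∑ τ, f τ = ∑ x, ∑ σ : Fin n → α, f (Fin.cons x σ) := by
  rw [← (Fin.consEquiv fun _ => α).sum_comp, Fintype.sum_prod_type]
  rfl

theorem sum_mul_le_sum_mul_add_l1_mul {ι : Type*} (s : Finset ι) (p q f : ι → ℝ) {M : ℝ}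
    (hf₀ : ∀ i ∈ s, 0 ≤ f i) (hfM : ∀ i ∈ s, f i ≤ M) :
    ∑ i ∈ s, q i * f i ≤ ∑ i ∈ s, p i * f i + (∑ i ∈ s, |p i - q i|) * M := by
  rw [Finset.sum_mul, ← Finset.sum_add_distrib]
  refine Finset.sum_le_sum fun i hi => ?_
  have : (q i - p i) * f i ≤ |p i - q i| * M := calc
    (q i - p i) * f i ≤ |q i - p i| * f i := by gcongr; exacts [hf₀ i hi, le_abs_self _]
    _ ≤ |p i - q i| * M := by rw [abs_sub_comm]; gcongr; exact hfM i hi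
  linarith

theorem trajReward_cons (g : S → A → ℝ) (n : ℕ) (x : S × A) (σ : Fin n → S × A) :
    trajReward (n + 1) g (Fin.cons x σ) = g x.1 x.2 + trajReward n g σ := by
  simp [trajReward, Fin.sum_univ_succ]

section FiniteHorizon

variable [Fintype S] [Fintype A]

noncomputable def horizonValue (T : S → A → S → ℝ) (π : S → A → ℝ) (g : S → A → ℝ) :
    ℕ → S → ℝ
  | 0, _ => 0
  | n + 1, s => ∑ a, π s a * (g s a + ∑ s', T s a s' * horizonValue T π g n s')

variable (T : S → A → S → ℝ) (π : S → A → ℝ) (g : S → A → ℝ)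

@[simp]
theorem horizonValue_zero : horizonValue T π g 0 = 0 := rfl

theorem horizonValue_succ (n : ℕ) (s : S) :
    horizonValue T π g (n + 1) s =
      ∑ a, π s a * (g s a + ∑ s', T s a s' * horizonValue T π g n s') := rfl

section Monotone

variable {T π g} (hT : ∀ s a s', 0 ≤ T s a s') (hπ : ∀ s a, 0 ≤ π s a)
  (hg : ∀ s a, 0 ≤ g s a)
include hT hπ hg

theorem horizonValue_le_succ (n : ℕ) : horizonValue T π g n ≤ horizonValue T π g (n + 1) := by
  induction n with
  | zero => exact fun s => Finset.sum_nonneg fun a _ => mul_nonneg (hπ s a) (by simpa using hg s a)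
  | succ n ih =>
    intro s
    rw [horizonValue_succ, horizonValue_succ _ _ _ (n + 1)]
    gcongr with a _ s' _
    exacts [hπ s a, hT s a s', ih s']

theorem horizonValue_monotone : Monotone (horizonValue T π g) :=
  monotone_nat_of_le_succ (horizonValue_le_succ hT hπ hg)

theorem horizonValue_nonneg (n : ℕ) (s : S) : 0 ≤ horizonValue T π g n s :=
  horizonValue_monotone hT hπ hg n.zero_le s

end Monotone

theorem horizonValue_le_horizonValue_of_tvDist {T π g} (That : S → A → S → ℝ) (g' : S → A → ℝ)
    {M : ℝ} (hThat : ∀ s a s', 0 ≤ That s a s') (hπ : ∀ s a, 0 ≤ π s a)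
    (hg : ∀ s a, g' s a + tvDist T That s a * M ≤ g s a) (n : ℕ)
    (hV : ∀ m < n, ∀ s, 0 ≤ horizonValue T π g m s ∧ horizonValue T π g m s ≤ M) :
    horizonValue That π g' n ≤ horizonValue T π g n := by
  induction n with
  | zero => exact le_rfl
  | succ n ih =>
    intro s
    rw [horizonValue_succ, horizonValue_succ]
    refine Finset.sum_le_sum fun a _ => mul_le_mul_of_nonneg_left ?_ (hπ s a)
    calc g' s a + ∑ s', That s a s' * horizonValue That π g' n s'
        ≤ g' s a + ∑ s', That s a s' * horizonValue T π g n s' := by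
          gcongr with s' _
          exacts [hThat s a s', ih (fun m hm => hV m (by omega)) s']
      _ ≤ g' s a + (∑ s', T s a s' * horizonValue T π g n s' + tvDist T That s a * M) := by
          gcongr
          exact sum_mul_le_sum_mul_add_l1_mul _ _ _ _ (fun s' _ => (hV n n.lt_succ_self s').1)
            (fun s' _ => (hV n n.lt_succ_self s').2)
      _ ≤ g s a + ∑ s', T s a s' * horizonValue T π g n s' := by linarith [hg s a]

variable [DecidableEq S]

theorem trajProb_succ (n : ℕ) (s₀ : S) (τ : Fin (n + 1) → S × A) :
    trajProb (n + 1) n.succ_pos s₀ T π τ =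
      (if (τ 0).1 = s₀ then 1 else 0) * (∏ j, π (τ j).1 (τ j).2) *
        ∏ j : Fin n, T (τ j.castSucc).1 (τ j.castSucc).2 (τ j.succ).1 :=
  rfl

theorem trajProb_cons (n : ℕ) (s₀ : S) (x : S × A) (σ : Fin (n + 1) → S × A) :
    trajProb (n + 2) (n + 1).succ_pos s₀ T π (Fin.cons x σ) =
      (if x.1 = s₀ then 1 else 0) * π x.1 x.2 *
        ∑ s', T x.1 x.2 s' * trajProb (n + 1) n.succ_pos s' T π σ := by
  simp only [trajProb_succ, Fin.prod_univ_succ, Fin.cons_zero, Fin.cons_succ,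
    Fin.castSucc_zero, ← Fin.succ_castSucc, mul_ite, ite_mul, one_mul, mul_zero,
    zero_mul, Finset.sum_ite_eq, Finset.mem_univ, if_true]
  split_ifs <;> ring

theorem trajProb_nonneg (hT : ∀ s a s', 0 ≤ T s a s') (hπ : ∀ s a, 0 ≤ π s a) (H : ℕ)
    (hH : 0 < H) (s₀ : S) (τ : Fin H → S × A) : 0 ≤ trajProb H hH s₀ T π τ := by
  refine mul_nonneg (mul_nonneg ?_ ?_) ?_
  · split_ifs <;> norm_num
  · exact Finset.prod_nonneg fun j _ => hπ _ _
  · exact Finset.prod_nonneg fun j _ => hT _ _ _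

-- The offset `c`, the reward collected before the current step, is what the induction carries.
variable {T π} in
theorem sum_trajProb_mul_add_trajReward (hT : ∀ s a, ∑ s', T s a s' = 1)
    (hπ : ∀ s, ∑ a, π s a = 1) (n : ℕ) (c : ℝ) (s₀ : S) :
    ∑ τ, trajProb (n + 1) n.succ_pos s₀ T π τ * (c + trajReward (n + 1) g τ) =
      c + horizonValue T π g (n + 1) s₀ := by
  have first_step : ∀ (c : ℝ) (s₀ : S) (F : S → A → ℝ),
      ∑ x : S × A, (if x.1 = s₀ then 1 else 0) * π x.1 x.2 * (c + F x.1 x.2) =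
        c + ∑ a, π s₀ a * F s₀ a := by
    intro c s₀ F
    simp [Fintype.sum_prod_type, Finset.sum_ite_irrel, mul_add, Finset.sum_add_distrib,
      ← Finset.sum_mul, hπ]
  induction n generalizing c s₀ with
  | zero =>
    simpa [Fin.sum_univ_fun_succ, trajProb_succ, trajReward_cons, trajReward,
      horizonValue_succ] using first_step c s₀ g
  | succ n ih =>
    let P : S × A → ℝ := fun x => (if x.1 = s₀ then 1 else 0) * π x.1 x.2
    calc _ = ∑ x, P x * ∑ s', T x.1 x.2 s' * ∑ σ, trajProb (n + 1) n.succ_pos s' T π σ *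
              ((c + g x.1 x.2) + trajReward (n + 1) g σ) := by
          rw [Fin.sum_univ_fun_succ]
          refine Finset.sum_congr rfl fun x _ => ?_
          simp only [trajProb_cons, trajReward_cons, Finset.mul_sum, Finset.sum_mul]
          rw [Finset.sum_comm]
          refine Finset.sum_congr rfl fun σ _ => Finset.sum_congr rfl fun s' _ => ?_
          ring
      _ = ∑ x, P x * (c + (g x.1 x.2 + ∑ s', T x.1 x.2 s' * horizonValue T π g (n + 1) s')) := by
          refine Finset.sum_congr rfl fun x _ => ?_
          simp_rw [ih, mul_add, Finset.sum_add_distrib, ← Finset.sum_mul, hT]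
          ring
      _ = c + horizonValue T π g (n + 1 + 1) s₀ :=
          first_step c s₀ fun s a => g s a + ∑ s', T s a s' * horizonValue T π g (n + 1) s'

variable {T π g} in
theorem horizonValue_le_of_trajReward_le (hT₀ : ∀ s a s', 0 ≤ T s a s')
    (hT₁ : ∀ s a, ∑ s', T s a s' = 1) (hπ₀ : ∀ s a, 0 ≤ π s a) (hπ₁ : ∀ s, ∑ a, π s a = 1)
    {n : ℕ} {M : ℝ} (hg : ∀ τ, trajReward (n + 1) g τ ≤ M) (s : S) :
    horizonValue T π g (n + 1) s ≤ M := by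
  have hsum := sum_trajProb_mul_add_trajReward g hT₁ hπ₁ n (-M) s
  have : ∑ τ, trajProb (n + 1) n.succ_pos s T π τ * (-M + trajReward (n + 1) g τ) ≤ 0 :=
    Finset.sum_nonpos fun τ _ =>
      mul_nonpos_of_nonneg_of_nonpos (trajProb_nonneg T π hT₀ hπ₀ _ _ s τ) (by linarith [hg τ])
  linarith

variable [DecidableEq A]

variable {T π} in
theorem value_eq_horizonValue (hT : ∀ s a, ∑ s', T s a s' = 1) (hπ : ∀ s, ∑ a, π s a = 1)
    (n : ℕ) (s₀ : S) : value (n + 1) n.succ_pos s₀ T π g = horizonValue T π g (n + 1) s₀ := by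
  simpa [value] using sum_trajProb_mul_add_trajReward g hT hπ n 0 s₀

end FiniteHorizon

theorem combined_pessimism_lower_bound_general [Fintype S] [Fintype A] [DecidableEq S]
    [DecidableEq A]
    (H : ℕ) (hH : 0 < H) (s₀ : S) (T That : S → A → S → ℝ) (π : S → A → ℝ)
    (R Rhat : S → A → ℝ) (uT uR : S → A → ℝ) (Rmax : ℝ)
    (hT : ∀ s a, (∀ s', 0 ≤ T s a s') ∧ ∑ s', T s a s' = 1)
    (hThat : ∀ s a, (∀ s', 0 ≤ That s a s') ∧ ∑ s', That s a s' = 1)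
    (hπ : ∀ s, (∀ a, 0 ≤ π s a) ∧ ∑ a, π s a = 1)
    (hRnonneg : ∀ s a, 0 ≤ R s a)
    (hRbound : ∀ τ : Fin H → S × A, trajReward H R τ ∈ Set.Icc 0 Rmax)
    (hRerr : ∀ s a, |Rhat s a - R s a| ≤ uR s a)
    (hTerr : ∀ s a, tvDist T That s a * Rmax ≤ uT s a) :
    (∑ τ : Fin H → S × A, trajProb H hH s₀ That π τ *
        (trajReward H Rhat τ - (∑ j, uT (τ j).1 (τ j).2) -
          ∑ j, uR (τ j).1 (τ j).2)) ≤
      value H hH s₀ T π R := by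
  obtain ⟨n, rfl⟩ : ∃ n, H = n + 1 := ⟨H - 1, by omega⟩
  have hT₀ s a := (hT s a).1
  have hπ₀ s := (hπ s).1
  let Rpess s a := Rhat s a - uT s a - uR s a
  have hRpess s a : Rpess s a + tvDist T That s a * Rmax ≤ R s a := by
    linarith [hTerr s a, le_abs_self (Rhat s a - R s a), hRerr s a]
  have hV m (hm : m < n + 1) s :
      0 ≤ horizonValue T π R m s ∧ horizonValue T π R m s ≤ Rmax :=
    ⟨horizonValue_nonneg hT₀ hπ₀ hRnonneg m s,
      (horizonValue_monotone hT₀ hπ₀ hRnonneg (by omega : m ≤ n + 1) s).trans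
        (horizonValue_le_of_trajReward_le hT₀ (fun s a => (hT s a).2) hπ₀ (fun s => (hπ s).2)
          (fun τ => (hRbound τ).2) s)⟩
  calc _ = value (n + 1) hH s₀ That π Rpess := by
        simp only [value, trajReward, Rpess, Finset.sum_sub_distrib]
    _ = horizonValue That π Rpess (n + 1) s₀ :=
        value_eq_horizonValue Rpess (fun s a => (hThat s a).2) (fun s => (hπ s).2) n s₀
    _ ≤ horizonValue T π R (n + 1) s₀ :=
        horizonValue_le_horizonValue_of_tvDist That Rpess (fun s a => (hThat s a).1) hπ₀ hRpess
          (n + 1) hV s₀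
    _ = value (n + 1) hH s₀ T π R :=
        (value_eq_horizonValue R (fun s a => (hT s a).2) (fun s => (hπ s).2) n s₀).symm

/-- Combined pessimism: uncertainty-penalized value in the learned model
lower-bounds the true value. -/
theorem combined_pessimism_lower_bound [Fintype S] [Fintype A] [DecidableEq S]
    [DecidableEq A]
    (H : ℕ) (hH : 0 < H) (s₀ : S) (T That : S → A → S → ℝ) (π : S → A → ℝ)
    (R Rhat : S → A → ℝ) (uT uR : S → A → ℝ) (Rmax : ℝ) (hRmax : 0 ≤ Rmax)
    (hT : ∀ s a, (∀ s', 0 ≤ T s a s') ∧ ∑ s', T s a s' = 1)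
    (hThat : ∀ s a, (∀ s', 0 ≤ That s a s') ∧ ∑ s', That s a s' = 1)
    (hπ : ∀ s, (∀ a, 0 ≤ π s a) ∧ ∑ a, π s a = 1)
    (huT : ∀ s a, 0 ≤ uT s a) (huR : ∀ s a, 0 ≤ uR s a)
    (hRnonneg : ∀ s a, 0 ≤ R s a)
    (hRbound : ∀ τ : Fin H → S × A, trajReward H R τ ∈ Set.Icc 0 Rmax)
    (hRerr : ∀ s a, |Rhat s a - R s a| ≤ uR s a)
    (hTerr : ∀ s a, tvDist T That s a * Rmax ≤ uT s a) :
    (∑ τ : Fin H → S × A, trajProb H hH s₀ That π τ *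
        (trajReward H Rhat τ - (∑ j, uT (τ j).1 (τ j).2) -
          ∑ j, uR (τ j).1 (τ j).2)) ≤
      value H hH s₀ T π R :=
  combined_pessimism_lower_bound_general H hH s₀ T That π R Rhat uT uR Rmax hT hThat hπ hRnonneg
    hRbound hRerr hTerr
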